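/- arXiv:2605.15563 — 2 statements merged into one kernel-verified Lean document; each statement's English description precedes it below -/
import Mathlib

section
/- Let D ∈ ℝ^{q×t} have full row rank q, let Θ ∈ ℝ^{n×q} and W ∈ ℝ^{n×t}, and set X₁ = Θ D + W. Suppose there exist δ ≥ 0 and γ > 0 such that (1/t)‖W Wᵀ‖ ≤ δ² and the smallest eigenvalue of (1/t) D Dᵀ is at least γ². Then the least-squares estimate Θ̂ = X₁ Dᵀ (D Dᵀ)⁻¹ satisfies ‖Θ̂ − Θ‖ ≤ δ/γ. -/
noncomputable section

open Matrix

/-- Operator norm induced by the Euclidean vector norms. -/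
def opNorm {m n : ℕ} (A : Matrix (Fin m) (Fin n) ℝ) : ℝ :=
  ‖LinearMap.toContinuousLinearMap (Matrix.toEuclideanLin A)‖

/-- Smallest eigenvalue of a (symmetric) real matrix, as the infimum of its real spectrum. -/
def eigMin {n : ℕ} (A : Matrix (Fin n) (Fin n) ℝ) : ℝ := sInf (spectrum ℝ A)

open scoped Matrix.Norms.L2Operator

lemma opNorm_eq_norm {m n : ℕ} (A : Matrix (Fin m) (Fin n) ℝ) : opNorm A = ‖A‖ := rfl

lemma real_transpose_eq_conjTranspose {m n : ℕ} (A : Matrix (Fin m) (Fin n) ℝ) : Aᵀ = Aᴴ := by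
  ext i j
  simp [Matrix.conjTranspose_apply]

lemma norm_one_le' {n : ℕ} : ‖(1 : Matrix (Fin n) (Fin n) ℝ)‖ ≤ 1 := by
  rw [Matrix.cstar_norm_def, _root_.map_one]
  exact ContinuousLinearMap.norm_id_le

lemma norm_unitary_le {n : ℕ} (U : Matrix (Fin n) (Fin n) ℝ)
    (h : U ∈ Matrix.unitaryGroup (Fin n) ℝ) : ‖U‖ ≤ 1 := by
  have h1 : Uᴴ * U = 1 := Matrix.mem_unitaryGroup_iff'.mp h
  have h2 : ‖U‖ * ‖U‖ = ‖(1 : Matrix (Fin n) (Fin n) ℝ)‖ := by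
    rw [← h1, Matrix.l2_opNorm_conjTranspose_mul_self]
  nlinarith [norm_nonneg U, norm_one_le' (n := n)]

set_option maxHeartbeats 1000000 in
lemma norm_diagonal_le {n : ℕ} (d : Fin n → ℝ) (c : ℝ) (hc : 0 ≤ c) (h : ∀ i, |d i| ≤ c) :
    ‖Matrix.diagonal d‖ ≤ c := by
  rw [Matrix.l2_opNorm_def]
  refine ContinuousLinearMap.opNorm_le_bound _ hc fun x => ?_
  set y := (Matrix.toEuclideanLin (m := Fin n) (n := Fin n) (𝕜 := ℝ)).trans
      LinearMap.toContinuousLinearMap (Matrix.diagonal d) x with hy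
  have hx : ∀ i, y i = d i * x i := fun i => Matrix.mulVec_diagonal d x i
  have h1 : ‖y‖ = Real.sqrt (∑ i, ‖y i‖ ^ 2) := EuclideanSpace.norm_eq y
  have h2 : ‖x‖ = Real.sqrt (∑ i, ‖x i‖ ^ 2) := EuclideanSpace.norm_eq x
  rw [h1, h2]
  have hle : ∑ i, ‖y i‖ ^ 2 ≤ c ^ 2 * ∑ i, ‖x i‖ ^ 2 := by
    rw [Finset.mul_sum]
    refine Finset.sum_le_sum fun i _ => ?_
    rw [hx i, Real.norm_eq_abs, Real.norm_eq_abs, abs_mul, mul_pow]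
    exact mul_le_mul_of_nonneg_right (pow_le_pow_left₀ (abs_nonneg _) (h i) 2) (sq_nonneg _)
  calc Real.sqrt (∑ i, ‖y i‖ ^ 2) ≤ Real.sqrt (c ^ 2 * ∑ i, ‖x i‖ ^ 2) := Real.sqrt_le_sqrt hle
    _ = c * Real.sqrt (∑ i, ‖x i‖ ^ 2) := by
        rw [Real.sqrt_mul (sq_nonneg c), Real.sqrt_sq hc]

set_option maxHeartbeats 1000000 in
/-- If `D` has full row rank, `X₁ = Θ D + W`, `(1/t)‖W Wᵀ‖ ≤ δ²` and
`λ_min((1/t) D Dᵀ) ≥ γ²`, then the least-squares estimate `Θ̂ = X₁ Dᵀ (D Dᵀ)⁻¹`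
satisfies `‖Θ̂ − Θ‖ ≤ δ/γ`. -/
theorem stmt2 (q t n : ℕ) (hq : 1 ≤ q) (hqt : q ≤ t)
    (D : Matrix (Fin q) (Fin t) ℝ) (hrank : D.rank = q)
    (Θ : Matrix (Fin n) (Fin q) ℝ) (W : Matrix (Fin n) (Fin t) ℝ)
    (X₁ : Matrix (Fin n) (Fin t) ℝ) (hX₁ : X₁ = Θ * D + W)
    (δ γ : ℝ) (hδ : 0 ≤ δ) (hγ : 0 < γ)
    (hW : (1 / (t : ℝ)) * opNorm (W * Wᵀ) ≤ δ ^ 2)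
    (hD : γ ^ 2 ≤ eigMin ((1 / (t : ℝ)) • (D * Dᵀ)))
    (Θhat : Matrix (Fin n) (Fin q) ℝ) (hΘhat : Θhat = X₁ * Dᵀ * (D * Dᵀ)⁻¹) :
    opNorm (Θhat - Θ) ≤ δ / γ := by
  classical
  have ht0 : 0 < (t : ℝ) := by
    have h1 : 1 ≤ t := le_trans hq hqt
    exact_mod_cast Nat.lt_of_lt_of_le Nat.zero_lt_one h1
  set M : Matrix (Fin q) (Fin q) ℝ := D * Dᵀ with hMdef
  set N : Matrix (Fin q) (Fin q) ℝ := (1 / (t : ℝ)) • M with hNdef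
  have hMher : M.IsHermitian := by
    rw [hMdef, real_transpose_eq_conjTranspose]
    exact Matrix.isHermitian_mul_conjTranspose_self D
  have hNher : N.IsHermitian := by
    show Nᴴ = N
    calc Nᴴ = (1 / (t : ℝ)) • Mᴴ := by rw [hNdef, Matrix.conjTranspose_smul]; norm_num
      _ = N := by rw [hMher.eq, hNdef]
  -- eigenvalue bounds
  have heig : ∀ i, γ ^ 2 ≤ hNher.eigenvalues i := fun i =>
    le_trans hD (csInf_le (Matrix.finite_spectrum N).bddBelow
      (hNher.eigenvalues_mem_spectrum_real i))
  have heigpos : ∀ i, 0 < hNher.eigenvalues i := fun i =>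
    lt_of_lt_of_le (by positivity) (heig i)
  set U : Matrix (Fin q) (Fin q) ℝ := (hNher.eigenvectorUnitary : Matrix (Fin q) (Fin q) ℝ) with hUdef
  set lam : Fin q → ℝ := hNher.eigenvalues with hlam
  have hUU : U * star U = 1 := Matrix.mem_unitaryGroup_iff.mp (hNher.eigenvectorUnitary).2
  have hUU' : star U * U = 1 := Matrix.mem_unitaryGroup_iff'.mp (hNher.eigenvectorUnitary).2
  have hspec : N = U * Matrix.diagonal lam * star U := by
    have h := hNher.spectral_theorem
    simpa using h
  set R : Matrix (Fin q) (Fin q) ℝ := U * Matrix.diagonal (fun i => (lam i)⁻¹) * star U with hRdef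
  have hdiag : Matrix.diagonal lam * Matrix.diagonal (fun i => (lam i)⁻¹) = 1 := by
    rw [Matrix.diagonal_mul_diagonal]
    convert Matrix.diagonal_one
    exact mul_inv_cancel₀ (ne_of_gt (heigpos _))
  have hdiag' : Matrix.diagonal (fun i => (lam i)⁻¹) * Matrix.diagonal lam = 1 := by
    rw [Matrix.diagonal_mul_diagonal]
    convert Matrix.diagonal_one
    exact inv_mul_cancel₀ (ne_of_gt (heigpos _))
  have hNR : N * R = 1 := by
    rw [hspec, hRdef]
    calc U * Matrix.diagonal lam * star U * (U * Matrix.diagonal (fun i => (lam i)⁻¹) * star U)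
        = U * (Matrix.diagonal lam * ((star U * U) *
            Matrix.diagonal (fun i => (lam i)⁻¹))) * star U := by
          simp only [Matrix.mul_assoc]
      _ = 1 := by rw [hUU', Matrix.one_mul, hdiag, Matrix.mul_one, hUU]
  have hRN : R * N = 1 := by
    rw [hspec, hRdef]
    calc U * Matrix.diagonal (fun i => (lam i)⁻¹) * star U * (U * Matrix.diagonal lam * star U)
        = U * (Matrix.diagonal (fun i => (lam i)⁻¹) * ((star U * U) *
            Matrix.diagonal lam)) * star U := by
          simp only [Matrix.mul_assoc]
      _ = 1 := by rw [hUU', Matrix.one_mul, hdiag', Matrix.mul_one, hUU]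
  have hMN : M = (t : ℝ) • N := by
    rw [hNdef, smul_smul, mul_one_div, div_self (ne_of_gt ht0), one_smul]
  have hMinv : M⁻¹ = (1 / (t : ℝ)) • R := by
    apply Matrix.inv_eq_left_inv
    rw [hMN, Matrix.smul_mul, Matrix.mul_smul, hRN, smul_smul, one_div,
      inv_mul_cancel₀ (ne_of_gt ht0), one_smul]
  have hMMinv : M * M⁻¹ = 1 := by
    rw [hMinv, hMN, Matrix.smul_mul, Matrix.mul_smul, hNR, smul_smul, one_div,
      mul_inv_cancel₀ (ne_of_gt ht0), one_smul]
  -- error matrix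
  have hE : Θhat - Θ = W * (Dᵀ * M⁻¹) := by
    rw [hΘhat, hX₁]
    have hexp : (Θ * D + W) * Dᵀ * M⁻¹ = Θ * (M * M⁻¹) + W * (Dᵀ * M⁻¹) := by
      rw [hMdef]
      simp only [Matrix.add_mul, Matrix.mul_assoc]
    rw [hexp, hMMinv, Matrix.mul_one]
    abel
  -- bound on W
  have hWn : ‖W‖ * ‖W‖ ≤ (t : ℝ) * δ ^ 2 := by
    have h3 : opNorm (W * Wᵀ) = ‖W‖ * ‖W‖ := by
      rw [opNorm_eq_norm, real_transpose_eq_conjTranspose]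
      have h2 := Matrix.l2_opNorm_conjTranspose_mul_self Wᴴ
      rwa [Matrix.conjTranspose_conjTranspose, Matrix.l2_opNorm_conjTranspose] at h2
    rw [h3] at hW
    rw [div_mul_eq_mul_div, one_mul, div_le_iff₀ ht0] at hW
    linarith [hW]
  -- the inverse is Hermitian
  have hMinvHer : (M⁻¹)ᴴ = M⁻¹ := by
    rw [hMinv, Matrix.conjTranspose_smul, hRdef]
    have : (U * Matrix.diagonal (fun i => (lam i)⁻¹) * star U)ᴴ
        = U * Matrix.diagonal (fun i => (lam i)⁻¹) * star U := by
      rw [Matrix.conjTranspose_mul, Matrix.conjTranspose_mul]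
      simp [Matrix.star_eq_conjTranspose, Matrix.diagonal_conjTranspose, Matrix.mul_assoc]
    rw [this]
    norm_num
  -- bound on B = Dᵀ * M⁻¹
  set B : Matrix (Fin t) (Fin q) ℝ := Dᵀ * M⁻¹ with hBdef
  have hBB : Bᴴ * B = M⁻¹ := by
    rw [hBdef, Matrix.conjTranspose_mul, hMinvHer, ← real_transpose_eq_conjTranspose,
      Matrix.transpose_transpose]
    have hstep : M⁻¹ * D * (Dᵀ * M⁻¹) = M⁻¹ * (M * M⁻¹) := by
      rw [hMdef]
      simp only [Matrix.mul_assoc]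
    rw [hstep, hMMinv, Matrix.mul_one]
  have hRn : ‖R‖ ≤ 1 / γ ^ 2 := by
    have hU1 : ‖U‖ ≤ 1 := norm_unitary_le U (hNher.eigenvectorUnitary).2
    have hU2 : ‖star U‖ ≤ 1 := by
      rw [Matrix.star_eq_conjTranspose, Matrix.l2_opNorm_conjTranspose]
      exact hU1
    have hd : ‖Matrix.diagonal (fun i => (lam i)⁻¹)‖ ≤ 1 / γ ^ 2 := by
      refine norm_diagonal_le _ _ (by positivity) fun i => ?_
      rw [abs_of_pos (inv_pos.mpr (heigpos i)), one_div]
      exact inv_anti₀ (by positivity) (heig i)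
    calc ‖R‖ ≤ ‖U * Matrix.diagonal (fun i => (lam i)⁻¹)‖ * ‖star U‖ :=
          Matrix.l2_opNorm_mul _ _
      _ ≤ ‖U‖ * ‖Matrix.diagonal (fun i => (lam i)⁻¹)‖ * ‖star U‖ := by
          have := Matrix.l2_opNorm_mul U (Matrix.diagonal (fun i => (lam i)⁻¹))
          exact mul_le_mul_of_nonneg_right this (norm_nonneg _)
      _ ≤ 1 * (1 / γ ^ 2) * 1 := by
          have hd0 := norm_nonneg (Matrix.diagonal (fun i => (lam i)⁻¹))
          have hU0 := norm_nonneg U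
          have hsU0 := norm_nonneg (star U)
          have hg0 : (0:ℝ) ≤ 1 / γ ^ 2 := by positivity
          gcongr
      _ = 1 / γ ^ 2 := by ring
  have hMinvn : ‖M⁻¹‖ ≤ 1 / ((t : ℝ) * γ ^ 2) := by
    rw [hMinv, norm_smul]
    have h1 : ‖(1 / (t : ℝ))‖ = 1 / (t : ℝ) := by
      rw [Real.norm_eq_abs, abs_of_pos (by positivity)]
    rw [h1]
    calc (1 / (t : ℝ)) * ‖R‖ ≤ (1 / (t : ℝ)) * (1 / γ ^ 2) := by
          exact mul_le_mul_of_nonneg_left hRn (by positivity)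
      _ = 1 / ((t : ℝ) * γ ^ 2) := by field_simp
  have hBn : ‖B‖ * ‖B‖ ≤ 1 / ((t : ℝ) * γ ^ 2) := by
    rw [← Matrix.l2_opNorm_conjTranspose_mul_self B, hBB]
    exact hMinvn
  -- assemble
  have hfinal : ‖Θhat - Θ‖ ≤ ‖W‖ * ‖B‖ := by
    rw [hE]
    exact Matrix.l2_opNorm_mul W B
  rw [opNorm_eq_norm]
  have hWB : (‖W‖ * ‖B‖) ^ 2 ≤ (δ / γ) ^ 2 := by
    have h1 : (‖W‖ * ‖B‖) ^ 2 = (‖W‖ * ‖W‖) * (‖B‖ * ‖B‖) := by ring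
    rw [h1]
    have h2 : (‖W‖ * ‖W‖) * (‖B‖ * ‖B‖) ≤ ((t : ℝ) * δ ^ 2) * (1 / ((t : ℝ) * γ ^ 2)) := by
      refine mul_le_mul hWn hBn (mul_self_nonneg _) (by positivity)
    calc (‖W‖ * ‖W‖) * (‖B‖ * ‖B‖) ≤ ((t : ℝ) * δ ^ 2) * (1 / ((t : ℝ) * γ ^ 2)) := h2
      _ = (δ / γ) ^ 2 := by field_simp
  have hWBle : ‖W‖ * ‖B‖ ≤ δ / γ := by
    have h0 : 0 ≤ ‖W‖ * ‖B‖ := mul_nonneg (norm_nonneg _) (norm_nonneg _)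
    have h1 : 0 ≤ δ / γ := by positivity
    nlinarith
  linarith
end
end

section
/- Let M ∈ ℝ^{n×n}, let Q ∈ ℝ^{n×n} be symmetric positive definite, and let P ∈ ℝ^{n×n} be symmetric positive semidefinite with P ⪰ Q + MᵀPM in the Loewner order. Then λ_min(P) ≥ λ_min(Q), and the operator norm of M satisfies ‖M‖² ≤ λ_max(P)/λ_min(Q) − 1, i.e. λ_max(P) ≥ (1 + ‖M‖²)·λ_min(Q). -/
noncomputable section

open Matrix

/-- Largest eigenvalue of a (symmetric) real matrix, as the supremum of its real spectrum. -/
def eigMax {n : ℕ} (A : Matrix (Fin n) (Fin n) ℝ) : ℝ := sSup (spectrum ℝ A)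

lemma eigMin_le {n : ℕ} {A : Matrix (Fin n) (Fin n) ℝ} (hA : A.IsHermitian) (i : Fin n) :
    eigMin A ≤ hA.eigenvalues i :=
  csInf_le (Matrix.finite_real_spectrum (A := A)).bddBelow (hA.eigenvalues_mem_spectrum_real i)

lemma le_eigMax {n : ℕ} {A : Matrix (Fin n) (Fin n) ℝ} (hA : A.IsHermitian) (i : Fin n) :
    hA.eigenvalues i ≤ eigMax A :=
  le_csSup (Matrix.finite_real_spectrum (A := A)).bddAbove (hA.eigenvalues_mem_spectrum_real i)

lemma eigMin_mem {n : ℕ} (hn : 0 < n) {A : Matrix (Fin n) (Fin n) ℝ} (hA : A.IsHermitian) :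
    ∃ i, hA.eigenvalues i = eigMin A := by
  have h1 := hA.spectrum_real_eq_range_eigenvalues
  have hne : (spectrum ℝ A).Nonempty := by
    rw [h1]; exact Set.range_nonempty_iff_nonempty.mpr ⟨⟨0, hn⟩⟩
  have := hne.csInf_mem (Matrix.finite_real_spectrum (A := A))
  rw [h1, Set.mem_range] at this
  simpa [eigMin, h1] using this

lemma smul_one_sub_posSemidef {n : ℕ} {A : Matrix (Fin n) (Fin n) ℝ} (hA : A.IsHermitian)
    (c : ℝ) (hc : ∀ i, c ≤ hA.eigenvalues i) : (A - c • 1).PosSemidef := by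
  have hU : (hA.eigenvectorUnitary : Matrix (Fin n) (Fin n) ℝ) *
      star (hA.eigenvectorUnitary : Matrix (Fin n) (Fin n) ℝ) = 1 :=
    mem_unitaryGroup_iff.mp hA.eigenvectorUnitary.2
  have hD : (Matrix.diagonal (fun i => hA.eigenvalues i - c)).PosSemidef :=
    Matrix.PosSemidef.diagonal (fun i => sub_nonneg.mpr (hc i))
  have key : A - c • 1 = (hA.eigenvectorUnitary : Matrix (Fin n) (Fin n) ℝ) *
      Matrix.diagonal (fun i => hA.eigenvalues i - c) *
      star (hA.eigenvectorUnitary : Matrix (Fin n) (Fin n) ℝ) := by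
    have hd : Matrix.diagonal (fun i => hA.eigenvalues i - c)
        = Matrix.diagonal (RCLike.ofReal ∘ hA.eigenvalues) - c • 1 := by
      ext i j
      by_cases h : i = j <;>
        simp [Matrix.diagonal_apply, Matrix.one_apply, h, RCLike.ofReal]
    rw [hd, Matrix.mul_sub, Matrix.sub_mul,
      ← Unitary.conjStarAlgAut_apply (S := ℝ) hA.eigenvectorUnitary (diagonal (RCLike.ofReal ∘ hA.eigenvalues)),
      ← hA.spectral_theorem]
    congr 1
    rw [Matrix.mul_smul, Matrix.smul_mul, mul_one, hU]
  rw [key, Matrix.star_eq_conjTranspose]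
  exact hD.mul_mul_conjTranspose_same _

lemma sub_smul_one_posSemidef {n : ℕ} {A : Matrix (Fin n) (Fin n) ℝ} (hA : A.IsHermitian)
    (c : ℝ) (hc : ∀ i, hA.eigenvalues i ≤ c) : (c • 1 - A).PosSemidef := by
  have hU : (hA.eigenvectorUnitary : Matrix (Fin n) (Fin n) ℝ) *
      star (hA.eigenvectorUnitary : Matrix (Fin n) (Fin n) ℝ) = 1 :=
    mem_unitaryGroup_iff.mp hA.eigenvectorUnitary.2
  have hD : (Matrix.diagonal (fun i => c - hA.eigenvalues i)).PosSemidef :=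
    Matrix.PosSemidef.diagonal (fun i => sub_nonneg.mpr (hc i))
  have key : c • 1 - A = (hA.eigenvectorUnitary : Matrix (Fin n) (Fin n) ℝ) *
      Matrix.diagonal (fun i => c - hA.eigenvalues i) *
      star (hA.eigenvectorUnitary : Matrix (Fin n) (Fin n) ℝ) := by
    have hd : Matrix.diagonal (fun i => c - hA.eigenvalues i)
        = c • 1 - Matrix.diagonal (RCLike.ofReal ∘ hA.eigenvalues) := by
      ext i j
      by_cases h : i = j <;>
        simp [Matrix.diagonal_apply, Matrix.one_apply, h, RCLike.ofReal]
    rw [hd, Matrix.mul_sub, Matrix.sub_mul,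
      ← Unitary.conjStarAlgAut_apply (S := ℝ) hA.eigenvectorUnitary (diagonal (RCLike.ofReal ∘ hA.eigenvalues)),
      ← hA.spectral_theorem]
    congr 1
    rw [Matrix.mul_smul, Matrix.smul_mul, mul_one, hU]
  rw [key, Matrix.star_eq_conjTranspose]
  exact hD.mul_mul_conjTranspose_same _

lemma quad_lower {n : ℕ} {A : Matrix (Fin n) (Fin n) ℝ} (hA : A.IsHermitian) (x : Fin n → ℝ) :
    eigMin A * (x ⬝ᵥ x) ≤ x ⬝ᵥ (A *ᵥ x) := by
  have h := (smul_one_sub_posSemidef hA (eigMin A) (eigMin_le hA)).dotProduct_mulVec_nonneg x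
  simp only [star_trivial, Matrix.sub_mulVec, dotProduct_sub,
    Matrix.smul_mulVec, Matrix.one_mulVec, dotProduct_smul, smul_eq_mul] at h
  linarith

lemma quad_upper {n : ℕ} {A : Matrix (Fin n) (Fin n) ℝ} (hA : A.IsHermitian) (x : Fin n → ℝ) :
    x ⬝ᵥ (A *ᵥ x) ≤ eigMax A * (x ⬝ᵥ x) := by
  have h := (sub_smul_one_posSemidef hA (eigMax A) (le_eigMax hA)).dotProduct_mulVec_nonneg x
  simp only [star_trivial, Matrix.sub_mulVec, dotProduct_sub,
    Matrix.smul_mulVec, Matrix.one_mulVec, dotProduct_smul, smul_eq_mul] at h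
  linarith


/-- If `Q ≻ 0`, `P ⪰ 0` and `P ⪰ Q + MᵀPM`, then `λ_min(P) ≥ λ_min(Q)` and
`‖M‖² ≤ λ_max(P)/λ_min(Q) − 1`, i.e. `λ_max(P) ≥ (1 + ‖M‖²) λ_min(Q)`. -/
theorem stmt13 (n : ℕ) (hn : 0 < n)
    (M Q P : Matrix (Fin n) (Fin n) ℝ)
    (hQ : Q.PosDef) (hP : P.PosSemidef)
    (hLyap : (P - Q - Mᵀ * P * M).PosSemidef) :
    eigMin Q ≤ eigMin P ∧
    opNorm M ^ 2 ≤ eigMax P / eigMin Q - 1 ∧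
    (1 + opNorm M ^ 2) * eigMin Q ≤ eigMax P := by

  have hPH := hP.1
  have hQH := hQ.1
  have dotnn : ∀ x : Fin n → ℝ, 0 ≤ x ⬝ᵥ x := fun x =>
    Finset.sum_nonneg fun i _ => mul_self_nonneg (x i)
  have normsq : ∀ z : EuclideanSpace ℝ (Fin n),
      ‖z‖ ^ 2 = (WithLp.equiv 2 (Fin n → ℝ) z) ⬝ᵥ (WithLp.equiv 2 (Fin n → ℝ) z) := by
    intro z
    rw [← real_inner_self_eq_norm_sq]
    simp only [PiLp.inner_apply, RCLike.inner_apply, conj_trivial, dotProduct]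
    rfl
  have expand : ∀ x : Fin n → ℝ, x ⬝ᵥ ((P - Q - Mᵀ * P * M) *ᵥ x)
      = x ⬝ᵥ (P *ᵥ x) - x ⬝ᵥ (Q *ᵥ x) - (M *ᵥ x) ⬝ᵥ (P *ᵥ (M *ᵥ x)) := by
    intro x
    rw [Matrix.sub_mulVec, Matrix.sub_mulVec, dotProduct_sub, dotProduct_sub]
    congr 1
    rw [← Matrix.mulVec_mulVec, ← Matrix.mulVec_mulVec, Matrix.dotProduct_mulVec,
      Matrix.vecMul_transpose]
  obtain ⟨i0, hi0⟩ := eigMin_mem hn hPH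
  set v : Fin n → ℝ := ⇑(hPH.eigenvectorBasis i0) with hv
  have hvP : P *ᵥ v = eigMin P • v := by rw [hv, hPH.mulVec_eigenvectorBasis, hi0]
  have hv1 : v ⬝ᵥ v = 1 := by
    have hnorm : ‖hPH.eigenvectorBasis i0‖ = 1 := hPH.eigenvectorBasis.orthonormal.1 i0
    have h2 : (inner ℝ (hPH.eigenvectorBasis i0) (hPH.eigenvectorBasis i0) : ℝ) = 1 := by
      rw [real_inner_self_eq_norm_sq, hnorm]; norm_num
    simp only [PiLp.inner_apply, RCLike.inner_apply, conj_trivial] at h2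
    simpa [dotProduct, hv, mul_comm] using h2
  have part1 : eigMin Q ≤ eigMin P := by
    have h := hLyap.dotProduct_mulVec_nonneg v
    rw [star_trivial, expand] at h
    have e2 : v ⬝ᵥ (P *ᵥ v) = eigMin P := by
      rw [hvP, dotProduct_smul, smul_eq_mul, hv1, mul_one]
    have h3 := quad_lower hQH v
    rw [hv1, mul_one] at h3
    have h4 := hP.dotProduct_mulVec_nonneg (M *ᵥ v)
    rw [star_trivial] at h4
    rw [e2] at h
    linarith
  have hQpos : 0 < eigMin Q := by
    obtain ⟨j, hj⟩ := eigMin_mem hn hQH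
    rw [← hj]; exact hQ.eigenvalues_pos j
  have hPQ : eigMin Q ≤ eigMax P :=
    part1.trans ((eigMin_le hPH ⟨0, hn⟩).trans (le_eigMax hPH ⟨0, hn⟩))
  have core : ∀ x : Fin n → ℝ,
      eigMin Q * ((M *ᵥ x) ⬝ᵥ (M *ᵥ x)) ≤ (eigMax P - eigMin Q) * (x ⬝ᵥ x) := by
    intro x
    have h := hLyap.dotProduct_mulVec_nonneg x
    rw [star_trivial, expand] at h
    have h2 := quad_upper hPH x
    have h3 := quad_lower hQH x
    have h4 := quad_lower hPH (M *ᵥ x)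
    have h5 := dotnn (M *ᵥ x)
    have h6 : eigMin Q * ((M *ᵥ x) ⬝ᵥ (M *ᵥ x)) ≤ eigMin P * ((M *ᵥ x) ⬝ᵥ (M *ᵥ x)) :=
      mul_le_mul_of_nonneg_right part1 h5
    linarith
  obtain ⟨C, hC⟩ : ∃ C : ℝ, C = eigMax P / eigMin Q - 1 := ⟨_, rfl⟩
  have hCQ : C * eigMin Q = eigMax P - eigMin Q := by
    rw [hC, sub_mul, div_mul_cancel₀ _ (ne_of_gt hQpos), one_mul]
  have hC0 : 0 ≤ C := by
    rw [hC, sub_nonneg, le_div_iff₀ hQpos, one_mul]; exact hPQ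
  have hnormle : opNorm M ≤ Real.sqrt C := by
    show ‖LinearMap.toContinuousLinearMap (Matrix.toEuclideanLin M)‖ ≤ Real.sqrt C
    refine ContinuousLinearMap.opNorm_le_bound _ (Real.sqrt_nonneg _) fun z => ?_
    have e : ‖(LinearMap.toContinuousLinearMap (Matrix.toEuclideanLin M)) z‖ ^ 2
        = (M *ᵥ WithLp.equiv 2 (Fin n → ℝ) z) ⬝ᵥ (M *ᵥ WithLp.equiv 2 (Fin n → ℝ) z) := by
      have h0 : (LinearMap.toContinuousLinearMap (Matrix.toEuclideanLin M)) z
          = Matrix.toEuclideanLin M z := rfl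
      rw [h0, normsq]; rfl
    have key := core (WithLp.equiv 2 (Fin n → ℝ) z)
    have hz2 : ‖(LinearMap.toContinuousLinearMap (Matrix.toEuclideanLin M)) z‖ ^ 2
        ≤ C * ‖z‖ ^ 2 := by
      rw [e, normsq z]
      nlinarith [key, hQpos, dotnn (WithLp.equiv 2 (Fin n → ℝ) z)]
    have h1 : ‖(LinearMap.toContinuousLinearMap (Matrix.toEuclideanLin M)) z‖
        ≤ Real.sqrt (C * ‖z‖ ^ 2) := by
      rw [← Real.sqrt_sq (norm_nonneg _)]
      exact Real.sqrt_le_sqrt hz2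
    calc _ ≤ Real.sqrt (C * ‖z‖ ^ 2) := h1
      _ = Real.sqrt C * ‖z‖ := by
          rw [Real.sqrt_mul hC0, Real.sqrt_sq (norm_nonneg z)]
  have hsq : opNorm M ^ 2 ≤ C := by
    have h := pow_le_pow_left₀ (norm_nonneg _) hnormle 2
    rwa [Real.sq_sqrt hC0] at h
  refine ⟨part1, hC ▸ hsq, ?_⟩
  have h := mul_le_mul_of_nonneg_right
    (by rw [hC] at hsq; linarith : 1 + opNorm M ^ 2 ≤ eigMax P / eigMin Q) hQpos.le
  rwa [div_mul_cancel₀ _ (ne_of_gt hQpos)] at h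
end
end
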